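/- arXiv:1612.05521 — 5 statements merged into one kernel-verified Lean document; each statement's English description precedes it below -/
import Mathlib

section
/- Let (X, σ) be a metric-like space, R a binary relation on X, and f : X → X. Assume: (a) there exists Y ⊆ X with f(X) ⊆ Y such that (Y, σ) is R-complete; (b) there exists x₀ ∈ X with (x₀, f x₀) ∈ R; (c) R is f-closed; (d) the restriction R|_Y is σ-self-closed; (e) there exists k ∈ [0,1) such that σ(fx, fy) ≤ k·σ(x, y) for all x, y ∈ X with (x, y) ∈ R. Then f has a fixed point. -/
open Filter Topology MeasureTheory

/-- A metric-like (dislocated) function on `X`: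
nonnegativity, (σ1) `σ x y = 0 → x = y`, (σ2) symmetry, (σ3) triangle inequality. -/
def MetricLike {X : Type*} (σ : X → X → ℝ) : Prop :=
  (∀ x y, 0 ≤ σ x y) ∧ (∀ x y, σ x y = 0 → x = y) ∧
    (∀ x y, σ x y = σ y x) ∧ (∀ x y z, σ x y ≤ σ x z + σ z y)

/-- Convergence of a sequence w.r.t. the topology `τ_σ`:
`lim_n σ (u n) x = σ x x`. -/
def ConvergesTo {X : Type*} (σ : X → X → ℝ) (u : ℕ → X) (x : X) : Prop :=
  Tendsto (fun n => σ (u n) x) atTop (𝓝 (σ x x))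

/-- A sequence is Cauchy if `lim_{n,m} σ (u n) (u m)` exists and is finite. -/
def IsCauchyML {X : Type*} (σ : X → X → ℝ) (u : ℕ → X) : Prop :=
  ∃ L : ℝ, Tendsto (fun q : ℕ × ℕ => σ (u q.1) (u q.2)) atTop (𝓝 L)

/-- A sequence is `R`-preserving if consecutive terms are `R`-related. -/
def RPreserving {X : Type*} (R : X → X → Prop) (u : ℕ → X) : Prop :=
  ∀ n, R (u n) (u (n + 1))

/-- `(Y, σ)` is `R`-complete: every `R`-preserving Cauchy sequence in `Y` has a
limit `x ∈ Y` with `lim_{n,m} σ (u n) (u m) = σ x x = lim_n σ (u n) x`. -/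
def RCompleteOn {X : Type*} (σ : X → X → ℝ) (R : X → X → Prop) (Y : Set X) : Prop :=
  ∀ u : ℕ → X, (∀ n, u n ∈ Y) → RPreserving R u → IsCauchyML σ u →
    ∃ x ∈ Y, Tendsto (fun q : ℕ × ℕ => σ (u q.1) (u q.2)) atTop (𝓝 (σ x x)) ∧
      ConvergesTo σ u x

/-- `(Y, σ)` is complete: every Cauchy sequence in `Y` has a limit `x ∈ Y` with
`lim_{n,m} σ (u n) (u m) = σ x x = lim_n σ (u n) x`. -/
def CompleteOn {X : Type*} (σ : X → X → ℝ) (Y : Set X) : Prop :=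
  ∀ u : ℕ → X, (∀ n, u n ∈ Y) → IsCauchyML σ u →
    ∃ x ∈ Y, Tendsto (fun q : ℕ × ℕ => σ (u q.1) (u q.2)) atTop (𝓝 (σ x x)) ∧
      ConvergesTo σ u x

/-- `R` is `f`-closed: `R x y → R (f x) (f y)`. -/
def FClosed {X : Type*} (R : X → X → Prop) (f : X → X) : Prop :=
  ∀ x y, R x y → R (f x) (f y)

/-- `f` is `R`-continuous-like: it preserves limits of `R`-preserving sequences. -/
def RContinuousLike {X : Type*} (σ : X → X → ℝ) (R : X → X → Prop) (f : X → X) : Prop :=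
  ∀ (u : ℕ → X) (x : X), RPreserving R u → ConvergesTo σ u x →
    ConvergesTo σ (fun n => f (u n)) (f x)

/-- `f` is continuous-like: it preserves limits of sequences w.r.t. `τ_σ`. -/
def ContinuousLike {X : Type*} (σ : X → X → ℝ) (f : X → X) : Prop :=
  ∀ (u : ℕ → X) (x : X), ConvergesTo σ u x → ConvergesTo σ (fun n => f (u n)) (f x)

/-- `R` is `σ`-self-closed: every `R`-preserving sequence converging to `x` has a
subsequence whose terms are `R`-comparable with `x`. -/
def SelfClosed {X : Type*} (σ : X → X → ℝ) (R : X → X → Prop) : Prop :=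
  ∀ (u : ℕ → X) (x : X), RPreserving R u → ConvergesTo σ u x →
    ∃ φ : ℕ → ℕ, StrictMono φ ∧ ∀ k, R (u (φ k)) x ∨ R x (u (φ k))

/-- The restriction of the relation `R` to a subset `Y`. -/
def Restrict {X : Type*} (R : X → X → Prop) (Y : Set X) : X → X → Prop :=
  fun x y => R x y ∧ x ∈ Y ∧ y ∈ Y

/-- There is a path of some (positive, finite) length from `a` to `b` in `R^s`:
a finite sequence `z 0 = a, …, z l = b` with `[z i, z (i+1)] ∈ R` for `i < l`. -/
def PathIn {X : Type*} (R : X → X → Prop) (a b : X) : Prop :=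
  ∃ (l : ℕ) (z : ℕ → X), 0 < l ∧ z 0 = a ∧ z l = b ∧
    ∀ i < l, R (z i) (z (i + 1)) ∨ R (z (i + 1)) (z i)

/-!
The Picard orbit `u n = fⁿ⁺¹ x₀` is `R`-preserving, so the contraction makes consecutive distances
decay like `kⁿ`, and the triangle inequality then gives `σ (u n) (u m) → 0`. `R`-completeness of
`Y ⊇ f(X)` yields a limit `x` with `σ x x = 0`, and self-closedness a subsequence comparable
with `x`; along it `σ x (f x) ≤ σ (u (n+1)) x + k σ (u n) x → 0`, so `f x = x`.
-/

namespace MetricLike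

variable {X : Type*} {σ : X → X → ℝ}

theorem self_le_two_mul (hML : MetricLike σ) (x y : X) : σ x x ≤ 2 * σ x y := by
  have := hML.2.2.2 x x y
  rw [hML.2.2.1 y x] at this
  linarith

theorem le_pow_mul_of_succ_le (hML : MetricLike σ) {u : ℕ → X} {k C : ℝ}
    (hk0 : 0 ≤ k) (hk1 : k < 1) (hu : ∀ n, σ (u n) (u (n + 1)) ≤ k ^ n * C) (n p : ℕ) :
    σ (u n) (u (n + p)) ≤ k ^ n * (2 * C / (1 - k)) := by
  have hC : 0 ≤ C := by simpa using (hML.1 _ _).trans (hu 0)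
  have hk : 0 < 1 - k := by linarith
  have hDC : (1 - k) * (2 * C / (1 - k)) = 2 * C := mul_div_cancel₀ _ hk.ne'
  have hD : 0 ≤ 2 * C / (1 - k) := div_nonneg (by linarith) hk.le
  set D := 2 * C / (1 - k)
  induction p generalizing n with
  | zero =>
    calc σ (u n) (u (n + 0)) ≤ 2 * σ (u n) (u (n + 1)) := hML.self_le_two_mul _ _
      _ ≤ 2 * (k ^ n * C) := by linarith [hu n]
      _ ≤ k ^ n * D := by
        linear_combination (-k ^ n) * hDC + mul_nonneg (pow_nonneg hk0 n) (mul_nonneg hk0 hD)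
  | succ q ih =>
    calc σ (u n) (u (n + (q + 1)))
        ≤ σ (u n) (u (n + 1)) + σ (u (n + 1)) (u (n + 1 + q)) := by
          rw [show n + (q + 1) = n + 1 + q by omega]
          exact hML.2.2.2 _ _ _
      _ ≤ k ^ n * C + k ^ (n + 1) * D := add_le_add (hu n) (ih (n + 1))
      _ ≤ k ^ n * D := by
        rw [pow_succ]
        linear_combination (-k ^ n) * hDC + mul_nonneg (pow_nonneg hk0 n) hC

theorem tendsto_zero_of_succ_le (hML : MetricLike σ) {u : ℕ → X} {k C : ℝ}
    (hk0 : 0 ≤ k) (hk1 : k < 1) (hu : ∀ n, σ (u n) (u (n + 1)) ≤ k ^ n * C) :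
    Tendsto (fun q : ℕ × ℕ => σ (u q.1) (u q.2)) atTop (𝓝 0) := by
  have hbound : ∀ n m, σ (u n) (u m) ≤ k ^ min n m * (2 * C / (1 - k)) := by
    intro n m
    rcases le_total n m with h | h
    · obtain ⟨p, rfl⟩ := Nat.exists_eq_add_of_le h
      simpa using hML.le_pow_mul_of_succ_le hk0 hk1 hu n p
    · obtain ⟨p, rfl⟩ := Nat.exists_eq_add_of_le h
      simpa [hML.2.2.1 (u (m + p))] using hML.le_pow_mul_of_succ_le hk0 hk1 hu m p
  have hmin : Tendsto (fun q : ℕ × ℕ => min q.1 q.2) atTop atTop :=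
    tendsto_atTop_atTop.2 fun b => ⟨(b, b), fun q hq => le_min hq.1 hq.2⟩
  have hpow := ((tendsto_pow_atTop_nhds_zero_of_lt_one hk0 hk1).comp hmin).mul_const
    (2 * C / (1 - k))
  rw [zero_mul] at hpow
  exact squeeze_zero (fun _ => hML.1 _ _) (fun q => hbound q.1 q.2) hpow

theorem eq_of_tendsto_of_comparable (hML : MetricLike σ) {R : X → X → Prop} {f : X → X}
    {k : ℝ} (he : ∀ x y, R x y → σ (f x) (f y) ≤ k * σ x y) {u : ℕ → X} {x : X}
    (hu : ∀ n, u (n + 1) = f (u n)) (hux : Tendsto (fun n => σ (u n) x) atTop (𝓝 0))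
    {φ : ℕ → ℕ} (hφ : StrictMono φ) (hcomp : ∀ j, R (u (φ j)) x ∨ R x (u (φ j))) :
    f x = x := by
  have hcontract : ∀ j, σ (u (φ j + 1)) (f x) ≤ k * σ (u (φ j)) x := by
    intro j
    rw [hu]
    rcases hcomp j with h | h
    · exact he _ _ h
    · rw [hML.2.2.1, hML.2.2.1 (u (φ j))]
      exact he _ _ h
  have hφ1 : Tendsto (fun j => φ j + 1) atTop atTop :=
    (tendsto_add_atTop_nat 1).comp hφ.tendsto_atTop
  have hlim : Tendsto (fun j => σ (u (φ j + 1)) x + k * σ (u (φ j)) x) atTop (𝓝 0) := by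
    simpa using (hux.comp hφ1).add ((hux.comp hφ.tendsto_atTop).const_mul k)
  have hfx : σ x (f x) ≤ 0 := by
    refine ge_of_tendsto' hlim fun j => ?_
    calc σ x (f x) ≤ σ x (u (φ j + 1)) + σ (u (φ j + 1)) (f x) := hML.2.2.2 _ _ _
      _ ≤ σ (u (φ j + 1)) x + k * σ (u (φ j)) x := by
        rw [hML.2.2.1 x]
        exact add_le_add le_rfl (hcontract j)
  exact (hML.2.1 _ _ (le_antisymm hfx (hML.1 _ _))).symm

end MetricLike

namespace FClosed

variable {X : Type*} {R : X → X → Prop} {f : X → X}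

theorem iterate (hc : FClosed R f) {x y : X} (h : R x y) (n : ℕ) : R (f^[n] x) (f^[n] y) := by
  induction n with
  | zero => exact h
  | succ n ih =>
    rw [Function.iterate_succ_apply', Function.iterate_succ_apply']
    exact hc _ _ ih

theorem rPreserving_orbit (hc : FClosed R f) {x : X} (h : R x (f x)) :
    RPreserving R (fun n => f^[n] x) :=
  hc.iterate h

end FClosed

theorem dist_iterate_succ_le {X : Type*} {σ : X → X → ℝ} {R : X → X → Prop} {f : X → X}
    {k : ℝ} (hk0 : 0 ≤ k) (he : ∀ x y, R x y → σ (f x) (f y) ≤ k * σ x y) {x : X}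
    (hR : RPreserving R (fun n => f^[n] x)) (n : ℕ) :
    σ (f^[n] x) (f^[n + 1] x) ≤ k ^ n * σ x (f x) := by
  induction n with
  | zero => simp
  | succ n ih =>
    calc σ (f^[n + 1] x) (f^[n + 1 + 1] x)
        = σ (f (f^[n] x)) (f (f^[n + 1] x)) := by
          simp only [Function.iterate_succ_apply']
      _ ≤ k * σ (f^[n] x) (f^[n + 1] x) := he _ _ (hR n)
      _ ≤ k * (k ^ n * σ x (f x)) := mul_le_mul_of_nonneg_left ih hk0
      _ = k ^ (n + 1) * σ x (f x) := by ring

/-- Relation-theoretic contraction principle in metric-like spaces: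
existence of a fixed point when `R|_Y` is `σ`-self-closed. -/
theorem fixedPoint_of_selfClosed {X : Type*} (σ : X → X → ℝ) (R : X → X → Prop)
    (f : X → X) (hML : MetricLike σ)
    (Y : Set X) (hfY : Set.range f ⊆ Y) (ha : RCompleteOn σ R Y)
    (x₀ : X) (hb : R x₀ (f x₀))
    (hc : FClosed R f)
    (hd : SelfClosed σ (Restrict R Y))
    (k : ℝ) (hk0 : 0 ≤ k) (hk1 : k < 1)
    (he : ∀ x y, R x y → σ (f x) (f y) ≤ k * σ x y) :
    ∃ x, f x = x := by
  set u : ℕ → X := fun n => f^[n] (f x₀)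
  have hR : RPreserving R u := hc.rPreserving_orbit (hc _ _ hb)
  have huY : ∀ n, u n ∈ Y := fun n => hfY ⟨f^[n] x₀, (Function.iterate_succ_apply' f n x₀).symm⟩
  have hcauchy := hML.tendsto_zero_of_succ_le hk0 hk1 (dist_iterate_succ_le hk0 he hR)
  obtain ⟨x, -, hxx, hux⟩ := ha u huY hR ⟨0, hcauchy⟩
  have hσxx : σ x x = 0 := tendsto_nhds_unique hxx hcauchy
  obtain ⟨φ, hφ, hcomp⟩ := hd u x (fun n => ⟨hR n, huY n, huY (n + 1)⟩) hux
  exact ⟨x, hML.eq_of_tendsto_of_comparable he (fun n => Function.iterate_succ_apply' f n _)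
    (hσxx ▸ hux) hφ fun j => (hcomp j).imp And.left And.left⟩
end

section
/- Let (X, σ) be a metric-like space and f : X → X. Suppose there exists Y with f(X) ⊆ Y ⊆ X such that (Y, σ) is complete (every Cauchy sequence in Y has a limit y ∈ Y with lim_{n,m→∞} σ(x_n, x_m) = σ(y,y) = lim_{n→∞} σ(x_n, y)), and there exists k ∈ [0,1) such that σ(fx, fy) ≤ k·σ(x, y) for all x, y ∈ X. Then f has a unique fixed point. -/
open Filter Topology MeasureTheory

/-
The Picard orbit `fⁿ x₀` of a contraction with constant `k < 1` satisfies
`σ(fⁿ x₀, fᵐ x₀) ≤ k^min(n,m) · 2σ(x₀, f x₀)/(1 - k)` (the factor 2 absorbs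
`σ(x₀, x₀) ≤ 2σ(x₀, f x₀)`, which need not vanish in a metric-like space), so
`σ(fⁿ x₀, fᵐ x₀) → 0` and the orbit is Cauchy. Since `f(X) ⊆ Y`, completeness of `Y` gives a limit `x` with `σ(x, x) = 0`, hence
`σ(fⁿ x₀, x) → 0`, and `σ(f x, x) ≤ k σ(fⁿ x₀, x) + σ(fⁿ⁺¹ x₀, x) → 0` makes `x` a fixed point.
Two fixed points `x, y` satisfy `σ(x, y) ≤ k σ(x, y)`, so `σ(x, y) = 0` and `x = y`.
-/

namespace MetricLike

variable {X : Type*} {σ : X → X → ℝ}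

theorem nonneg (hML : MetricLike σ) (x y : X) : 0 ≤ σ x y := hML.1 x y

theorem eq_of_eq_zero (hML : MetricLike σ) {x y : X} (h : σ x y = 0) : x = y := hML.2.1 x y h

theorem symm (hML : MetricLike σ) (x y : X) : σ x y = σ y x := hML.2.2.1 x y

theorem triangle (hML : MetricLike σ) (x y z : X) : σ x y ≤ σ x z + σ z y := hML.2.2.2 x y z

end MetricLike

section Contraction

variable {X : Type*} {σ : X → X → ℝ} {f : X → X} {k : ℝ}

theorem iterate_le_pow_mul_of_contraction (hk0 : 0 ≤ k)
    (he : ∀ x y, σ (f x) (f y) ≤ k * σ x y) (n : ℕ) (x y : X) :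
    σ (f^[n] x) (f^[n] y) ≤ k ^ n * σ x y := by
  induction n generalizing x y with
  | zero => simp
  | succ n ih =>
    calc σ (f^[n + 1] x) (f^[n + 1] y) = σ (f^[n] (f x)) (f^[n] (f y)) := rfl
      _ ≤ k ^ n * σ (f x) (f y) := ih _ _
      _ ≤ k ^ n * (k * σ x y) := by gcongr; exact he x y
      _ = k ^ (n + 1) * σ x y := by ring

theorem MetricLike.self_iterate_le_of_contraction (hML : MetricLike σ) (hk0 : 0 ≤ k)
    (hk1 : k < 1) (he : ∀ x y, σ (f x) (f y) ≤ k * σ x y) (x : X) (m : ℕ) :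
    σ x (f^[m] x) ≤ 2 * σ x (f x) / (1 - k) := by
  set d := σ x (f x)
  set C := 2 * d / (1 - k)
  have hC : (1 - k) * C = 2 * d := mul_div_cancel₀ _ (sub_pos.2 hk1).ne'
  have hkC : 0 ≤ k * C :=
    mul_nonneg hk0 (div_nonneg (by linarith [hML.nonneg x (f x)]) (by linarith))
  induction m with
  | zero =>
    calc σ x x ≤ σ x (f x) + σ (f x) x := hML.triangle x x (f x)
      _ = 2 * d := by rw [hML.symm (f x) x]; ring
      _ ≤ C := by linarith
  | succ m ih =>
    calc σ x (f^[m + 1] x) ≤ σ x (f x) + σ (f x) (f (f^[m] x)) := by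
          rw [Function.iterate_succ_apply']; exact hML.triangle _ _ _
      _ ≤ d + k * σ x (f^[m] x) := by gcongr; exact he _ _
      _ ≤ d + k * C := by gcongr
      _ ≤ C := by linarith [hML.nonneg x (f x)]

theorem MetricLike.iterate_iterate_le_of_contraction (hML : MetricLike σ) (hk0 : 0 ≤ k)
    (hk1 : k < 1) (he : ∀ x y, σ (f x) (f y) ≤ k * σ x y) (x : X) {n m : ℕ} (hnm : n ≤ m) :
    σ (f^[n] x) (f^[m] x) ≤ k ^ n * (2 * σ x (f x) / (1 - k)) := by
  calc σ (f^[n] x) (f^[m] x) = σ (f^[n] x) (f^[n] (f^[m - n] x)) := by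
        rw [← Function.iterate_add_apply, Nat.add_sub_cancel' hnm]
    _ ≤ k ^ n * σ x (f^[m - n] x) := iterate_le_pow_mul_of_contraction hk0 he _ _ _
    _ ≤ k ^ n * (2 * σ x (f x) / (1 - k)) := by
        gcongr; exact hML.self_iterate_le_of_contraction hk0 hk1 he x _

theorem MetricLike.tendsto_contraction_orbit_zero (hML : MetricLike σ) (hk0 : 0 ≤ k)
    (hk1 : k < 1) (he : ∀ x y, σ (f x) (f y) ≤ k * σ x y) (x : X) :
    Tendsto (fun q : ℕ × ℕ => σ (f^[q.1] x) (f^[q.2] x)) atTop (𝓝 0) := by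
  set C := 2 * σ x (f x) / (1 - k)
  have hbound : ∀ q : ℕ × ℕ, σ (f^[q.1] x) (f^[q.2] x) ≤ k ^ min q.1 q.2 * C := by
    rintro ⟨n, m⟩
    rcases le_total n m with h | h
    · rw [min_eq_left h]; exact hML.iterate_iterate_le_of_contraction hk0 hk1 he x h
    · rw [min_eq_right h, hML.symm]; exact hML.iterate_iterate_le_of_contraction hk0 hk1 he x h
  have hmin : Tendsto (fun q : ℕ × ℕ => min q.1 q.2) atTop atTop :=
    tendsto_atTop.2 fun b => (eventually_ge_atTop (b, b)).mono fun _ hq => le_min hq.1 hq.2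
  have hgeo : Tendsto (fun n : ℕ => k ^ n * C) atTop (𝓝 0) := by
    simpa using (tendsto_pow_atTop_nhds_zero_of_lt_one hk0 hk1).mul_const C
  exact squeeze_zero (fun _ => hML.nonneg _ _) hbound (hgeo.comp hmin)

theorem MetricLike.isFixedPt_of_tendsto_orbit (hML : MetricLike σ)
    (he : ∀ x y, σ (f x) (f y) ≤ k * σ x y) {u : ℕ → X} (hu : ∀ n, u (n + 1) = f (u n)) {x : X}
    (hx : Tendsto (fun n => σ (u n) x) atTop (𝓝 0)) : Function.IsFixedPt f x := by
  have hbound : ∀ n, σ (f x) x ≤ k * σ (u n) x + σ (u (n + 1)) x := fun n =>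
    calc σ (f x) x ≤ σ (f x) (f (u n)) + σ (u (n + 1)) x := by
          rw [← hu]; exact hML.triangle _ _ _
      _ ≤ k * σ (u n) x + σ (u (n + 1)) x := by
          rw [hML.symm (f x)]; gcongr; exact he _ _
  have hlim : Tendsto (fun n => k * σ (u n) x + σ (u (n + 1)) x) atTop (𝓝 0) := by
    simpa using (hx.const_mul k).add (hx.comp (tendsto_add_atTop_nat 1))
  exact hML.eq_of_eq_zero <| le_antisymm (ge_of_tendsto' hlim hbound) (hML.nonneg _ _)

theorem MetricLike.eq_of_isFixedPt_of_contraction (hML : MetricLike σ) (hk1 : k < 1)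
    (he : ∀ x y, σ (f x) (f y) ≤ k * σ x y) {x y : X} (hx : Function.IsFixedPt f x)
    (hy : Function.IsFixedPt f y) : x = y := by
  have h : σ x y ≤ k * σ x y := by simpa only [hx.eq, hy.eq] using he x y
  exact hML.eq_of_eq_zero <| by nlinarith [hML.nonneg x y]

end Contraction

/-- Corollary 4: improved Banach contraction principle in metric-like spaces
(completeness only needed on a subset `Y ⊇ f(X)`). -/
theorem banach_metricLike {X : Type*} [Nonempty X] (σ : X → X → ℝ) (f : X → X)
    (hML : MetricLike σ)
    (Y : Set X) (hfY : Set.range f ⊆ Y) (ha : CompleteOn σ Y)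
    (k : ℝ) (hk0 : 0 ≤ k) (hk1 : k < 1)
    (he : ∀ x y, σ (f x) (f y) ≤ k * σ x y) :
    ∃! x, f x = x := by
  obtain ⟨x₀⟩ := ‹Nonempty X›
  set u : ℕ → X := fun n => f^[n] (f x₀)
  have hu : ∀ n, u (n + 1) = f (u n) := fun n => Function.iterate_succ_apply' f n (f x₀)
  have hY : ∀ n, u n ∈ Y := fun n =>
    hfY ⟨f^[n] x₀, Function.Commute.self_iterate f n x₀⟩
  have hcauchy := hML.tendsto_contraction_orbit_zero hk0 hk1 he (f x₀)
  obtain ⟨x, -, hdiag, hconv⟩ := ha u hY ⟨0, hcauchy⟩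
  have hxx : σ x x = 0 := tendsto_nhds_unique hdiag hcauchy
  have hfix : f x = x := hML.isFixedPt_of_tendsto_orbit he hu (hxx ▸ hconv)
  exact ⟨x, hfix, fun y hy => hML.eq_of_isFixedPt_of_contraction hk1 he hy hfix⟩
end

section
/- Let (X, σ) be a metric-like space, R a binary relation on X that is f-closed for a self-map f : X → X, and suppose there exists k ∈ [0,1) with σ(fx, fy) ≤ k·σ(x, y) for all x, y ∈ X with (x, y) ∈ R. If p and q are fixed points of f and there exists a path z₀ = p, z₁, …, z_l = q in R^s (i.e., [z_i, z_{i+1}] ∈ R for each 0 ≤ i ≤ l−1), then p = q. -/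
open Filter Topology MeasureTheory

/-!
Applying `f^[n]` to a path from `p` to `q` gives a path from `p` to `q` again (both are fixed and
`R` is `f`-closed), each of whose edges is `k ^ n` times shorter. By the triangle inequality
`σ p q ≤ k ^ n * C` for every `n`, where `C` is the length of the original path, so `σ p q = 0`.
-/

namespace MetricLike

variable {X : Type*} {σ : X → X → ℝ}

-- `0 < l` is needed: `σ x x` need not vanish in a metric-like space.
theorem le_sum_path (hσ : MetricLike σ) (z : ℕ → X) {l : ℕ} (hl : 0 < l) :
    σ (z 0) (z l) ≤ ∑ i ∈ Finset.range l, σ (z i) (z (i + 1)) := by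
  induction l, hl using Nat.le_induction with
  | base => simp
  | succ l _ ih =>
    rw [Finset.sum_range_succ]
    exact (hσ.2.2.2 (z 0) (z (l + 1)) (z l)).trans (by gcongr)

end MetricLike

section RelationalContraction

variable {X : Type*} {σ : X → X → ℝ} {R : X → X → Prop} {f : X → X} {k : ℝ}

theorem le_mul_of_rel_or_rel (hsymm : ∀ x y, σ x y = σ y x)
    (he : ∀ x y, R x y → σ (f x) (f y) ≤ k * σ x y) {x y : X} (hxy : R x y ∨ R y x) :
    σ (f x) (f y) ≤ k * σ x y := by
  rcases hxy with hxy | hyx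
  · exact he x y hxy
  · rw [hsymm (f x), hsymm x]
    exact he y x hyx

theorem iterate_le_pow_mul_of_rel_or_rel (hsymm : ∀ x y, σ x y = σ y x) (hc : FClosed R f)
    (hk0 : 0 ≤ k) (he : ∀ x y, R x y → σ (f x) (f y) ≤ k * σ x y) {x y : X}
    (hxy : R x y ∨ R y x) (n : ℕ) :
    σ (f^[n] x) (f^[n] y) ≤ k ^ n * σ x y := by
  induction n generalizing x y with
  | zero => simp
  | succ n ih =>
    have hfxy : R (f x) (f y) ∨ R (f y) (f x) := hxy.imp (hc x y) (hc y x)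
    calc σ (f^[n + 1] x) (f^[n + 1] y) = σ (f^[n] (f x)) (f^[n] (f y)) := rfl
      _ ≤ k ^ n * σ (f x) (f y) := ih hfxy
      _ ≤ k ^ n * (k * σ x y) := by gcongr; exact le_mul_of_rel_or_rel hsymm he hxy
      _ = k ^ (n + 1) * σ x y := by ring

end RelationalContraction

/-- Uniqueness of fixed points joined by a path in `R^s` under a relational
contraction in a metric-like space. -/
theorem fixedPoint_unique_of_path {X : Type*} (σ : X → X → ℝ) (R : X → X → Prop)
    (f : X → X) (hML : MetricLike σ)
    (hc : FClosed R f)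
    (k : ℝ) (hk0 : 0 ≤ k) (hk1 : k < 1)
    (he : ∀ x y, R x y → σ (f x) (f y) ≤ k * σ x y)
    (p q : X) (hp : f p = p) (hq : f q = q)
    (hpath : PathIn R p q) :
    p = q := by
  obtain ⟨l, z, hl, rfl, rfl, hedge⟩ := hpath
  set C := ∑ i ∈ Finset.range l, σ (z i) (z (i + 1))
  have hbound (n : ℕ) : σ (z 0) (z l) ≤ k ^ n * C := calc
    σ (z 0) (z l) = σ (f^[n] (z 0)) (f^[n] (z l)) := by
      rw [Function.iterate_fixed hp, Function.iterate_fixed hq]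
    _ ≤ ∑ i ∈ Finset.range l, σ (f^[n] (z i)) (f^[n] (z (i + 1))) :=
      hML.le_sum_path (fun i => f^[n] (z i)) hl
    _ ≤ ∑ i ∈ Finset.range l, k ^ n * σ (z i) (z (i + 1)) :=
      Finset.sum_le_sum fun i hi =>
        iterate_le_pow_mul_of_rel_or_rel hML.2.2.1 hc hk0 he (hedge i (Finset.mem_range.1 hi)) n
    _ = k ^ n * C := (Finset.mul_sum _ _ _).symm
  have hle : σ (z 0) (z l) ≤ 0 := by
    simpa using ge_of_tendsto' ((tendsto_pow_atTop_nhds_zero_of_lt_one hk0 hk1).mul_const C) hbound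
  exact hML.2.1 _ _ (le_antisymm hle (hML.1 _ _))
end

section
/- Let (X, p) be a partial metric space and f : X → X. Suppose there exists Y with f(X) ⊆ Y ⊆ X such that (Y, p) is complete (every Cauchy sequence in Y has a limit y ∈ Y with lim_{n,m→∞} p(x_n, x_m) = p(y,y) = lim_{n→∞} p(x_n, y)), and there exists k ∈ [0,1) such that p(fx, fy) ≤ k·p(x, y) for all x, y ∈ X. Then f has a unique fixed point. -/
/-!
The Picard orbit `xₙ = fⁿ⁺¹(x₀)` lies in `Y` and satisfies `p(xₙ, xₙ₊ⱼ) ≤ kⁿ p(x₀, x₁) / (1 - k)`,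
so `p(xₙ, xₘ) → 0`. Completeness of `Y` gives a limit `x` whose self-distance is this double limit,
i.e. `p(x, x) = 0`; then `p(f x, x) ≤ k p(xₙ, x) + p(xₙ₊₁, x) → 0` forces `f x = x`.
Two fixed points `a, b` satisfy `p(a, b) ≤ k p(a, b)`, hence `p(a, b) = 0` and `a = b`.
-/

open Filter Topology MeasureTheory

/-- A partial metric on `X`. -/
def PartialMetricOn {X : Type*} (p : X → X → ℝ) : Prop :=
  (∀ x y, 0 ≤ p x y) ∧ (∀ x y, x = y ↔ (p x x = p x y ∧ p x y = p y y)) ∧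
    (∀ x y, p x x ≤ p x y) ∧ (∀ x y, p x y = p y x) ∧
    (∀ x y z, p x y ≤ p x z + p z y - p z z)



theorem iterate_succ_le_pow_mul {X : Type*} {p : X → X → ℝ} {f : X → X} {k : ℝ} (hk0 : 0 ≤ k)
    (he : ∀ x y, p (f x) (f y) ≤ k * p x y) (x : X) (n : ℕ) :
    p (f^[n] x) (f^[n + 1] x) ≤ k ^ n * p x (f x) := by
  induction n with
  | zero => simp
  | succ n ih =>
    calc p (f^[n + 1] x) (f^[n + 2] x)
        = p (f (f^[n] x)) (f (f^[n + 1] x)) := by simp only [Function.iterate_succ_apply']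
      _ ≤ k * (k ^ n * p x (f x)) := (he _ _).trans (mul_le_mul_of_nonneg_left ih hk0)
      _ = k ^ (n + 1) * p x (f x) := by ring

namespace PartialMetricOn

variable {X : Type*} {p : X → X → ℝ}

theorem nonneg (hp : PartialMetricOn p) (x y : X) : 0 ≤ p x y := hp.1 x y

theorem self_le (hp : PartialMetricOn p) (x y : X) : p x x ≤ p x y := hp.2.2.1 x y

theorem symm (hp : PartialMetricOn p) (x y : X) : p x y = p y x := hp.2.2.2.1 x y

theorem le_add (hp : PartialMetricOn p) (x y z : X) : p x y ≤ p x z + p z y :=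
  (hp.2.2.2.2 x y z).trans (by linarith [hp.nonneg z z])

theorem eq_of_eq_zero (hp : PartialMetricOn p) {x y : X} (h : p x y = 0) : x = y := by
  have hxx : p x x = 0 := le_antisymm ((hp.self_le x y).trans_eq h) (hp.nonneg x x)
  have hyy : p y y = 0 :=
    le_antisymm ((hp.self_le y x).trans_eq ((hp.symm y x).trans h)) (hp.nonneg y y)
  exact (hp.2.1 x y).2 ⟨hxx.trans h.symm, h.trans hyy.symm⟩

section Contraction

variable {f : X → X} {k : ℝ}

theorem iterate_add_le (hp : PartialMetricOn p) (hk0 : 0 ≤ k) (hk1 : k < 1)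
    (he : ∀ x y, p (f x) (f y) ≤ k * p x y) (x : X) (n j : ℕ) :
    p (f^[n] x) (f^[n + j] x) ≤ k ^ n * (p x (f x) / (1 - k)) := by
  set C := p x (f x)
  have hC_le : C ≤ C / (1 - k) := le_div_self (hp.nonneg _ _) (by linarith) (by linarith)
  induction j generalizing n with
  | zero =>
    calc p (f^[n] x) (f^[n + 0] x) ≤ p (f^[n] x) (f^[n + 1] x) := hp.self_le _ _
      _ ≤ k ^ n * C := iterate_succ_le_pow_mul hk0 he x n
      _ ≤ k ^ n * (C / (1 - k)) := mul_le_mul_of_nonneg_left hC_le (pow_nonneg hk0 n)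
  | succ j ih =>
    calc p (f^[n] x) (f^[n + (j + 1)] x)
        ≤ p (f^[n] x) (f^[n + 1] x) + p (f^[n + 1] x) (f^[n + 1 + j] x) := by
          rw [← add_assoc, add_right_comm]; exact hp.le_add _ _ _
      _ ≤ k ^ n * C + k ^ (n + 1) * (C / (1 - k)) :=
          add_le_add (iterate_succ_le_pow_mul hk0 he x n) (ih (n + 1))
      _ = k ^ n * (C / (1 - k)) := by field_simp [show 1 - k ≠ 0 by linarith]; ring

theorem iterate_le_pow_min (hp : PartialMetricOn p) (hk0 : 0 ≤ k) (hk1 : k < 1)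
    (he : ∀ x y, p (f x) (f y) ≤ k * p x y) (x : X) (n m : ℕ) :
    p (f^[n] x) (f^[m] x) ≤ k ^ min n m * (p x (f x) / (1 - k)) := by
  rcases le_total n m with h | h
  · obtain ⟨j, rfl⟩ := Nat.exists_eq_add_of_le h
    simpa [min_eq_left h] using hp.iterate_add_le hk0 hk1 he x n j
  · obtain ⟨j, rfl⟩ := Nat.exists_eq_add_of_le h
    simpa [min_eq_right h, hp.symm (f^[m + j] x)] using hp.iterate_add_le hk0 hk1 he x m j

theorem tendsto_iterate_iterate_zero (hp : PartialMetricOn p) (hk0 : 0 ≤ k) (hk1 : k < 1)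
    (he : ∀ x y, p (f x) (f y) ≤ k * p x y) (x : X) :
    Tendsto (fun q : ℕ × ℕ => p (f^[q.1] x) (f^[q.2] x)) atTop (𝓝 0) := by
  have hmin : Tendsto (fun q : ℕ × ℕ => min q.1 q.2) atTop atTop :=
    tendsto_atTop_atTop_of_monotone (fun _ _ h => min_le_min h.1 h.2)
      fun b => ⟨(b, b), (min_self b).ge⟩
  have hbound :
      Tendsto (fun q : ℕ × ℕ => k ^ min q.1 q.2 * (p x (f x) / (1 - k))) atTop (𝓝 0) := by
    simpa using ((tendsto_pow_atTop_nhds_zero_of_lt_one hk0 hk1).comp hmin).mul_const _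
  exact squeeze_zero (fun _ => hp.nonneg _ _)
    (fun q => hp.iterate_le_pow_min hk0 hk1 he x q.1 q.2) hbound

theorem isFixedPt_of_convergesTo (hp : PartialMetricOn p)
    (he : ∀ x y, p (f x) (f y) ≤ k * p x y) {y x : X}
    (hx : ConvergesTo p (fun n => f^[n] y) x) (hxx : p x x = 0) : Function.IsFixedPt f x := by
  rw [ConvergesTo, hxx] at hx
  have hbound : ∀ n, p (f x) x ≤ k * p (f^[n] y) x + p (f^[n + 1] y) x := fun n =>
    calc p (f x) x ≤ p (f x) (f^[n + 1] y) + p (f^[n + 1] y) x := hp.le_add _ _ _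
      _ ≤ k * p (f^[n] y) x + p (f^[n + 1] y) x := by
        rw [Function.iterate_succ_apply', hp.symm (f^[n] y)]
        exact add_le_add_left (he _ _) _
  have hlim : Tendsto (fun n => k * p (f^[n] y) x + p (f^[n + 1] y) x) atTop (𝓝 0) := by
    simpa using (hx.const_mul k).add (hx.comp (tendsto_add_atTop_nat 1))
  exact hp.eq_of_eq_zero (le_antisymm (ge_of_tendsto' hlim hbound) (hp.nonneg _ _))

theorem eq_of_isFixedPt (hp : PartialMetricOn p) (hk1 : k < 1)
    (he : ∀ x y, p (f x) (f y) ≤ k * p x y) {a b : X}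
    (ha : Function.IsFixedPt f a) (hb : Function.IsFixedPt f b) : a = b := by
  have h := he a b
  rw [ha, hb] at h
  exact hp.eq_of_eq_zero (by nlinarith [hp.nonneg a b])

end Contraction

end PartialMetricOn

/-- Banach contraction principle in partial metric spaces, with completeness
required only on a subset `Y ⊇ f(X)`. -/
theorem banach_partialMetric {X : Type*} [Nonempty X] (p : X → X → ℝ) (f : X → X)
    (hPM : PartialMetricOn p)
    (Y : Set X) (hfY : Set.range f ⊆ Y) (ha : CompleteOn p Y)
    (k : ℝ) (hk0 : 0 ≤ k) (hk1 : k < 1)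
    (he : ∀ x y, p (f x) (f y) ≤ k * p x y) :
    ∃! x, f x = x := by
  obtain ⟨x₀⟩ := ‹Nonempty X›
  have horbit : ∀ n, f^[n] (f x₀) ∈ Y := fun n =>
    hfY ⟨f^[n] x₀, Function.Commute.self_iterate f n x₀⟩
  have hcauchy := hPM.tendsto_iterate_iterate_zero hk0 hk1 he (f x₀)
  obtain ⟨x, -, hself, hconv⟩ := ha _ horbit ⟨0, hcauchy⟩
  have hxx : p x x = 0 := tendsto_nhds_unique hself hcauchy
  have hfix : Function.IsFixedPt f x := hPM.isFixedPt_of_convergesTo he hconv hxx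
  exact ⟨x, hfix, fun y hy => hPM.eq_of_isFixedPt hk1 he hy hfix⟩
end

section
/- Let (X, d) be a metric space, R a binary relation on X, and f : X → X. Assume: (a) every R-preserving Cauchy sequence in X converges in X; (b) there exists x₀ ∈ X with (x₀, f x₀) ∈ R; (c) R is f-closed; (d) either f is R-continuous (for every R-preserving sequence (x_n) converging to x, (f x_n) converges to f x) or R is d-self-closed (for every R-preserving sequence (x_n) converging to x there is a subsequence (x_{n_k}) with [x_{n_k}, x] ∈ R for all k); (e) there exists k ∈ [0,1) such that d(fx, fy) ≤ k·d(x, y) for all x, y ∈ X with (x, y) ∈ R. Then f has a fixed point. If moreover (f) for each pair x, y ∈ X there exists a path from fx to fy in R^s, then the fixed point is unique. -/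
/-!
The Picard iterates `fⁿ x₀` form an `R`-preserving sequence on which `f` contracts by `k`, so
consecutive distances decay geometrically and the sequence converges. Either form of (d) makes
its limit a fixed point: `R`-continuity directly, `d`-self-closedness because the subsequence
related to the limit is contracted towards it. For uniqueness, apply `fⁿ` to an `R^s`-path
between two fixed points: every link shrinks by `kⁿ`, so their distance is at most `kⁿ` times
the length of the path, hence zero.
-/

open Filter Topology

section Relation

variable {X : Type*} {R : X → X → Prop} {f : X → X}

theorem FClosed.iterate_s16 (hc : FClosed R f) (n : ℕ) : FClosed R f^[n] := by
  induction n with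
  | zero => exact fun _ _ h => h
  | succ n ih =>
    intro x y h
    simpa only [Function.iterate_succ_apply'] using hc _ _ (ih x y h)

theorem FClosed.symm (hc : FClosed R f) : FClosed (fun x y => R x y ∨ R y x) f :=
  fun x y h => h.imp (hc x y) (hc y x)

theorem rPreserving_iterate (hc : FClosed R f) {x : X} (hx : R x (f x)) :
    RPreserving R (fun n => f^[n] x) := fun n => by
  simpa only [Function.iterate_succ_apply] using hc.iterate_s16 n x (f x) hx

end Relation

section Contraction

variable {X : Type*} [MetricSpace X] {R : X → X → Prop} {f : X → X} {k : ℝ}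

theorem dist_le_of_related_or_related (he : ∀ x y, R x y → dist (f x) (f y) ≤ k * dist x y)
    {x y : X} (h : R x y ∨ R y x) : dist (f x) (f y) ≤ k * dist x y := by
  rcases h with h | h
  · exact he x y h
  · simpa only [dist_comm] using he y x h

theorem dist_iterate_le_pow_mul (hc : FClosed R f)
    (he : ∀ x y, R x y → dist (f x) (f y) ≤ k * dist x y) (hk0 : 0 ≤ k)
    {x y : X} (h : R x y) (n : ℕ) : dist (f^[n] x) (f^[n] y) ≤ k ^ n * dist x y := by
  induction n with
  | zero => simp
  | succ n ih =>
    calc dist (f^[n + 1] x) (f^[n + 1] y)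
        ≤ k * dist (f^[n] x) (f^[n] y) := by
          simpa only [Function.iterate_succ_apply'] using he _ _ (hc.iterate_s16 n x y h)
      _ ≤ k * (k ^ n * dist x y) := mul_le_mul_of_nonneg_left ih hk0
      _ = k ^ (n + 1) * dist x y := by ring

theorem cauchySeq_iterate (hc : FClosed R f)
    (he : ∀ x y, R x y → dist (f x) (f y) ≤ k * dist x y) (hk0 : 0 ≤ k) (hk1 : k < 1)
    {x : X} (hx : R x (f x)) : CauchySeq (fun n => f^[n] x) := by
  refine cauchySeq_of_le_geometric k (dist x (f x)) hk1 fun n => ?_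
  rw [mul_comm, Function.iterate_succ_apply]
  exact dist_iterate_le_pow_mul hc he hk0 hx n

theorem tendsto_apply_of_related_or_related
    (he : ∀ x y, R x y → dist (f x) (f y) ≤ k * dist x y)
    {v : ℕ → X} {x : X} (hv : Tendsto v atTop (𝓝 x)) (hrel : ∀ j, R (v j) x ∨ R x (v j)) :
    Tendsto (fun j => f (v j)) atTop (𝓝 (f x)) := by
  rw [tendsto_iff_dist_tendsto_zero] at hv ⊢
  refine squeeze_zero (fun _ => dist_nonneg)
    (fun j => dist_le_of_related_or_related he (hrel j)) ?_
  simpa using hv.const_mul k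

theorem isFixedPt_of_tendsto_iterate_of_subseq {x₀ x : X}
    (hx : Tendsto (fun n => f^[n] x₀) atTop (𝓝 x))
    (hfx : ∃ φ : ℕ → ℕ, StrictMono φ ∧
      Tendsto (fun j => f (f^[φ j] x₀)) atTop (𝓝 (f x))) :
    f x = x := by
  obtain ⟨φ, hφ, hf⟩ := hfx
  have hshift : Tendsto (fun j => f (f^[φ j] x₀)) atTop (𝓝 x) := by
    simpa only [Function.comp_def, Function.iterate_succ_apply'] using
      hx.comp ((tendsto_add_atTop_nat 1).comp hφ.tendsto_atTop)
  exact tendsto_nhds_unique hf hshift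

theorem eq_of_dist_le_pow_mul (hk0 : 0 ≤ k) (hk1 : k < 1) {x y : X} {S : ℝ}
    (h : ∀ n : ℕ, dist x y ≤ k ^ n * S) : x = y := by
  have hlim : Tendsto (fun n : ℕ => k ^ n * S) atTop (𝓝 0) := by
    simpa using (tendsto_pow_atTop_nhds_zero_of_lt_one hk0 hk1).mul_const S
  exact dist_le_zero.mp (ge_of_tendsto' hlim h)

theorem eq_of_isFixedPt_of_pathIn (hc : FClosed R f)
    (he : ∀ x y, R x y → dist (f x) (f y) ≤ k * dist x y) (hk0 : 0 ≤ k) (hk1 : k < 1)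
    {x y : X} (hx : f x = x) (hy : f y = y) (hxy : PathIn R x y) : x = y := by
  obtain ⟨l, z, -, rfl, rfl, hlink⟩ := hxy
  have hlink_iterate (n : ℕ) {i : ℕ} (hi : i < l) :
      dist (f^[n] (z i)) (f^[n] (z (i + 1))) ≤ k ^ n * dist (z i) (z (i + 1)) :=
    dist_iterate_le_pow_mul hc.symm (fun _ _ => dist_le_of_related_or_related he) hk0
      (hlink i hi) n
  refine eq_of_dist_le_pow_mul hk0 hk1
    (S := ∑ i ∈ Finset.range l, dist (z i) (z (i + 1))) fun n => ?_
  calc dist (z 0) (z l) = dist (f^[n] (z 0)) (f^[n] (z l)) := by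
        rw [Function.iterate_fixed hx, Function.iterate_fixed hy]
    _ ≤ ∑ i ∈ Finset.range l, dist (f^[n] (z i)) (f^[n] (z (i + 1))) :=
        dist_le_range_sum_dist (fun i => f^[n] (z i)) l
    _ ≤ ∑ i ∈ Finset.range l, k ^ n * dist (z i) (z (i + 1)) :=
        Finset.sum_le_sum fun i hi => hlink_iterate n (Finset.mem_range.mp hi)
    _ = k ^ n * ∑ i ∈ Finset.range l, dist (z i) (z (i + 1)) := by rw [Finset.mul_sum]

end Contraction

/-- Relation-theoretic contraction principle in metric spaces. -/
theorem uniqueFixedPoint_metric {X : Type*} [MetricSpace X] (R : X → X → Prop)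
    (f : X → X)
    (ha : ∀ u : ℕ → X, RPreserving R u → CauchySeq u → ∃ x, Tendsto u atTop (𝓝 x))
    (x₀ : X) (hb : R x₀ (f x₀))
    (hc : FClosed R f)
    (hd : (∀ (u : ℕ → X) (x : X), RPreserving R u → Tendsto u atTop (𝓝 x) →
            Tendsto (fun n => f (u n)) atTop (𝓝 (f x))) ∨
          (∀ (u : ℕ → X) (x : X), RPreserving R u → Tendsto u atTop (𝓝 x) →
            ∃ φ : ℕ → ℕ, StrictMono φ ∧ ∀ k, R (u (φ k)) x ∨ R x (u (φ k))))
    (k : ℝ) (hk0 : 0 ≤ k) (hk1 : k < 1)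
    (he : ∀ x y, R x y → dist (f x) (f y) ≤ k * dist x y) :
    (∃ x, f x = x) ∧ ((∀ x y, PathIn R (f x) (f y)) → ∃! x, f x = x) := by
  have hR := rPreserving_iterate hc hb
  obtain ⟨x, hx⟩ := ha _ hR (cauchySeq_iterate hc he hk0 hk1 hb)
  have hfix : f x = x := by
    refine isFixedPt_of_tendsto_iterate_of_subseq hx ?_
    rcases hd with hcont | hself
    · exact ⟨id, strictMono_id, hcont _ x hR hx⟩
    · obtain ⟨φ, hφ, hrel⟩ := hself _ x hR hx
      exact ⟨φ, hφ, tendsto_apply_of_related_or_related he (hx.comp hφ.tendsto_atTop) hrel⟩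
  refine ⟨⟨x, hfix⟩, fun hpath => ⟨x, hfix, fun y hy => ?_⟩⟩
  have hyx := hpath y x
  rw [hy, hfix] at hyx
  exact eq_of_isFixedPt_of_pathIn hc he hk0 hk1 hy hfix hyx
end
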